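/- arXiv:2505.05641 — 4 statements merged into one kernel-verified Lean document; each statement's English description precedes it below -/
import Mathlib

section
/- Let Q be a 3×3 symmetric matrix over a commutative ring R, whose entries are the coefficients of a ternary quadratic form, and let γ ∈ GL₃(R) with cofactor matrix δ(γ) = det(γ)(γ⁻¹)ᵗ. Then the quadratic form (x₁,x₂,x₃) ↦ (x₁,x₂,x₃)·Adj(δ(γ)·Q·δ(γ)ᵗ)·(x₁,x₂,x₃)ᵗ equals det(γ)² times the form (x₁,x₂,x₃) ↦ ((x₁,x₂,x₃)γ)·Adj(Q)·((x₁,x₂,x₃)γ)ᵗ. -/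
open Matrix

/-- Covariance of the adjugate quadratic form: for a symmetric `3×3` matrix `Q` over a
commutative ring `R` and `γ ∈ GL₃(R)` with cofactor matrix `δ(γ) = det(γ)·(γ⁻¹)ᵗ`, the
quadratic form `x ↦ x·Adj(δ(γ)·Q·δ(γ)ᵗ)·xᵗ` equals `det(γ)²` times the form
`x ↦ (x·γ)·Adj(Q)·(x·γ)ᵗ`. -/
theorem adjugate_covariance (R : Type*) [CommRing R]
    (Q : Matrix (Fin 3) (Fin 3) R) (hQ : Q.IsSymm)
    (γ : Matrix.GeneralLinearGroup (Fin 3) R) (x : Fin 3 → R) :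
    letI g : Matrix (Fin 3) (Fin 3) R := γ
    letI δ : Matrix (Fin 3) (Fin 3) R := g.det • ((↑(γ⁻¹) : Matrix (Fin 3) (Fin 3) R)ᵀ)
    x ⬝ᵥ ((δ * Q * δᵀ).adjugate *ᵥ x) =
      g.det ^ 2 * ((x ᵥ* g) ⬝ᵥ (Q.adjugate *ᵥ (x ᵥ* g))) := by
  set g : Matrix (Fin 3) (Fin 3) R := (↑γ : Matrix (Fin 3) (Fin 3) R) with hg
  set δ : Matrix (Fin 3) (Fin 3) R := g.det • ((↑(γ⁻¹) : Matrix (Fin 3) (Fin 3) R)ᵀ) with hδdef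
  have hu : IsUnit g.det := (Matrix.isUnit_iff_isUnit_det g).mp γ.isUnit
  have hinv : (↑(γ⁻¹) : Matrix (Fin 3) (Fin 3) R) = g⁻¹ := by
    rw [Matrix.coe_units_inv]
  have h1 : g.det • g⁻¹ = g.adjugate := by
    rw [Matrix.inv_def, smul_smul, Ring.mul_inverse_cancel _ hu, one_smul]
  have hδ : δ = (g.adjugate)ᵀ := by
    rw [hδdef, hinv, ← Matrix.transpose_smul, h1]
  have hadjδ : δ.adjugate = g.det • gᵀ := by
    rw [hδ, Matrix.adjugate_transpose, Matrix.adjugate_adjugate _ (by simp)]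
    simp [Matrix.det_transpose]
  have key : (δ * Q * δᵀ).adjugate = g.det ^ 2 • (g * Q.adjugate * gᵀ) := by
    rw [Matrix.adjugate_mul_distrib, Matrix.adjugate_mul_distrib,
      ← Matrix.adjugate_transpose, hadjδ]
    simp [Matrix.transpose_smul, Matrix.smul_mul, Matrix.mul_smul, smul_smul, sq,
      Matrix.mul_assoc]
  rw [key]
  rw [Matrix.smul_mulVec, dotProduct_smul, smul_eq_mul]
  congr 1
  simp [← Matrix.mulVec_mulVec, Matrix.dotProduct_mulVec, Matrix.mulVec_transpose,
    Matrix.mul_assoc]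
end

section
/- Let T₁, T₂, T₃ be linear forms in x₁, x₂, x₃ over a commutative ring R, let M be a 3×3 symmetric matrix whose entries are quadratic forms in x₁, x₂, x₃, and let G be the 3×3 symmetric matrix with entries G_{ij} = x_i T_j + x_j T_i. Then the sextic form (x₁,x₂,x₃)·Adj(M+G)·(x₁,x₂,x₃)ᵗ equals (x₁,x₂,x₃)·Adj(M)·(x₁,x₂,x₃)ᵗ; i.e., it is independent of T₁, T₂, T₃. -/
open Matrix MvPolynomial

lemma sextic_aux {S : Type*} [CommRing S] (m : Matrix (Fin 3) (Fin 3) S)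
    (x t : Fin 3 → S) :
    x ⬝ᵥ ((m + Matrix.of fun i j => x i * t j + x j * t i).adjugate *ᵥ x) =
      x ⬝ᵥ (m.adjugate *ᵥ x) := by
  simp only [Matrix.adjugate_fin_three, dotProduct, Matrix.mulVec,
    Fin.sum_univ_three, Matrix.add_apply, Matrix.of_apply, Matrix.cons_val',
    Matrix.cons_val_zero, Matrix.cons_val_one, Matrix.head_cons,
    Matrix.empty_val', Matrix.cons_val_fin_one, Matrix.head_fin_const,
    Matrix.cons_val_two, Matrix.tail_cons]
  ring

/-- Well-definedness of the covariant `I_x`: if `T₁,T₂,T₃` are linear forms in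
`x₁,x₂,x₃`, `M` is a symmetric `3×3` matrix of quadratic forms, and `G` is the symmetric
matrix with entries `G_{ij} = x_i T_j + x_j T_i`, then the sextic form
`x·Adj(M+G)·xᵗ` equals `x·Adj(M)·xᵗ`; i.e., it is independent of the `Tᵢ`. -/
theorem sextic_covariant_well_defined (R : Type*) [CommRing R]
    (T : Fin 3 → MvPolynomial (Fin 3) R)
    (hT : ∀ i, (T i).IsHomogeneous 1)
    (M : Matrix (Fin 3) (Fin 3) (MvPolynomial (Fin 3) R))
    (hM : M.IsSymm)
    (hMdeg : ∀ i j, (M i j).IsHomogeneous 2)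
    (G : Matrix (Fin 3) (Fin 3) (MvPolynomial (Fin 3) R))
    (hG : ∀ i j, G i j = MvPolynomial.X i * T j + MvPolynomial.X j * T i) :
    (fun i => (MvPolynomial.X i : MvPolynomial (Fin 3) R)) ⬝ᵥ
        ((M + G).adjugate *ᵥ fun i => MvPolynomial.X i) =
      (fun i => (MvPolynomial.X i : MvPolynomial (Fin 3) R)) ⬝ᵥ
        (M.adjugate *ᵥ fun i => MvPolynomial.X i) := by
  have hGeq : G = Matrix.of fun i j =>
      (MvPolynomial.X i : MvPolynomial (Fin 3) R) * T j + MvPolynomial.X j * T i := by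
    exact Matrix.ext hG
  rw [hGeq]
  exact sextic_aux M (fun i => MvPolynomial.X i) T
end

section
/- Let K be a number field and S a finite set of places containing all archimedean places. Fix positive integers n₁,…,n_m. Consider tuples (I₁,…,I_m) ∈ O_{K,S}^m such that for every prime 𝔭 ∉ S, not all I_i reduce to 0 modulo 𝔭. The group O_{K,S}^× acts on such tuples by u·(I₁,…,I_m) = (u^{n₁}I₁,…,u^{n_m}I_m), and ℂ^× acts similarly on ℂ^m. Then the natural map from O_{K,S}^×-orbits of such tuples to ℂ^×-orbits of nonzero tuples in ℂ^m has finite fibers. -/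
open IsDedekindDomain

section AuxDedekind

variable {R : Type*} [CommRing R] [IsDedekindDomain R] {K : Type*} [Field K]
  [Algebra R K] [IsFractionRing R K]

private lemma WOMFF.dvd_of_intValuation_le (a b : R) (hb : b ≠ 0)
    (h : ∀ v : HeightOneSpectrum R, v.intValuationDef a ≤ v.intValuationDef b) : b ∣ a := by
  classical
  by_cases ha : a = 0
  · simp [ha]
  rw [← Ideal.span_singleton_le_span_singleton, ← Ideal.dvd_iff_le, ← Associates.mk_dvd_mk]
  refine Associates.factors_le.mp ?_
  have hA : Associates.mk (Ideal.span {a} : Ideal R) ≠ 0 := by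
    rw [Associates.mk_ne_zero, Ne, Ideal.zero_eq_bot, Ideal.span_singleton_eq_bot]; exact ha
  have hB : Associates.mk (Ideal.span {b} : Ideal R) ≠ 0 := by
    rw [Associates.mk_ne_zero, Ne, Ideal.zero_eq_bot, Ideal.span_singleton_eq_bot]; exact hb
  obtain ⟨sa, hsa⟩ := Associates.factors_eq_some_iff_ne_zero.mpr hA
  obtain ⟨sb, hsb⟩ := Associates.factors_eq_some_iff_ne_zero.mpr hB
  rw [hsa, hsb, WithTop.coe_le_coe, Multiset.le_iff_count]
  rintro ⟨q, hq⟩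
  obtain ⟨Q, rfl⟩ := Associates.mk_surjective q
  rw [Associates.irreducible_mk] at hq
  have hQprime : Prime Q := UniqueFactorizationMonoid.irreducible_iff_prime.mp hq
  have hQbot : Q ≠ ⊥ := by simpa [Ideal.zero_eq_bot] using hQprime.ne_zero
  set v : HeightOneSpectrum R := ⟨Q, (Ideal.prime_iff_isPrime hQbot).mp hQprime, hQbot⟩
  have hv := h v
  rw [v.intValuationDef_if_neg ha, v.intValuationDef_if_neg hb, WithZero.exp_le_exp,
    neg_le_neg_iff, Int.ofNat_le] at hv
  have hva : (Associates.mk v.asIdeal).count (Associates.mk (Ideal.span {a} : Ideal R)).factors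
      = sa.count ⟨Associates.mk Q, Associates.irreducible_mk.mpr hq⟩ := by
    rw [hsa]; exact Associates.count_some _ _
  have hvb : (Associates.mk v.asIdeal).count (Associates.mk (Ideal.span {b} : Ideal R)).factors
      = sb.count ⟨Associates.mk Q, Associates.irreducible_mk.mpr hq⟩ := by
    rw [hsb]; exact Associates.count_some _ _
  rw [hva, hvb] at hv
  exact hv

private lemma WOMFF.exists_algebraMap_eq_of_valuation_le_one (x : K)
    (h : ∀ v : HeightOneSpectrum R, v.valuation K x ≤ 1) :
    ∃ r : R, algebraMap R K r = x := by
  obtain ⟨⟨a, s⟩, rfl⟩ := IsLocalization.mk'_surjective (nonZeroDivisors R) x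
  have key : ∀ v : HeightOneSpectrum R, v.intValuationDef a ≤ v.intValuationDef (s : R) := by
    intro v
    have hv := h v
    rw [HeightOneSpectrum.valuation_of_mk' v] at hv
    have hs : v.intValuation (s : R) ≠ 0 := v.intValuation_ne_zero' s
    rw [div_le_one₀ (zero_lt_iff.mpr hs)] at hv
    exact hv
  obtain ⟨c, hc⟩ := WOMFF.dvd_of_intValuation_le a (s : R) (nonZeroDivisors.coe_ne_zero s) key
  refine ⟨c, ?_⟩
  rw [IsLocalization.eq_mk'_iff_mul_eq, ← map_mul, mul_comm c (s : R), ← hc]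

end AuxDedekind

private lemma WOMFF.exists_heightOneSpectrum_not_mem (K : Type*) [Field K] [NumberField K]
    (S : Set (HeightOneSpectrum (NumberField.RingOfIntegers K))) (hS : S.Finite) :
    ∃ v : HeightOneSpectrum (NumberField.RingOfIntegers K), v ∉ S := by
  set R := NumberField.RingOfIntegers K
  have hex : ∀ p : Nat.Primes, ∃ v : HeightOneSpectrum R,
      Ideal.comap (algebraMap ℤ R) v.asIdeal = Ideal.span {(p : ℤ)} := by
    intro p
    have hp : Prime ((p : ℕ) : ℤ) := Nat.prime_iff_prime_int.mp p.2
    have hmax : (Ideal.span {((p : ℕ) : ℤ)}).IsMaximal :=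
      PrincipalIdealRing.isMaximal_of_irreducible hp.irreducible
    have hker : RingHom.ker (algebraMap ℤ R) ≤ Ideal.span {((p : ℕ) : ℤ)} := by
      rw [(RingHom.injective_iff_ker_eq_bot _).mp (algebraMap ℤ R).injective_int]
      exact bot_le
    obtain ⟨Q, hQmax, hQcomap⟩ := Ideal.exists_ideal_over_maximal_of_isIntegral
      (Ideal.span {((p : ℕ) : ℤ)}) hker
    refine ⟨⟨Q, hQmax.isPrime, ?_⟩, hQcomap⟩
    rintro rfl
    have hb : Ideal.span {((p:ℕ) : ℤ)} = ⊥ := by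
      rw [← hQcomap]
      exact (RingHom.injective_iff_ker_eq_bot _).mp (algebraMap ℤ R).injective_int
    rw [Ideal.span_singleton_eq_bot] at hb
    exact hp.ne_zero hb
  choose f hf using hex
  have hinj : Function.Injective f := by
    intro p q hpq
    have h2 : Ideal.span {((p:ℕ) : ℤ)} = Ideal.span {((q:ℕ) : ℤ)} := by
      rw [← hf p, ← hf q, hpq]
    rw [Ideal.span_singleton_eq_span_singleton] at h2
    have := Int.associated_iff_natAbs.mp h2
    exact Subtype.ext (by exact_mod_cast this)
  by_contra h
  push_neg at h
  exact Set.infinite_range_of_injective hinj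
    (hS.subset (Set.range_subset_iff.mpr fun p => h (f p)))

private lemma WOMFF.sunit_fg (K : Type*) [Field K] [NumberField K]
    (S : Set (HeightOneSpectrum (NumberField.RingOfIntegers K))) (hS : S.Finite) :
    Group.FG (S.unit K) := by
  classical
  set R := NumberField.RingOfIntegers K
  set φ : (S.unit K) →* ({v // v ∈ hS.toFinset} → Multiplicative ℤ) :=
    { toFun := fun u v => (v.1 : HeightOneSpectrum R).valuationOfNeZero ((u : Kˣ))
      map_one' := by funext v; simp
      map_mul' := fun u w => by funext v; simp } with hφ
  have hker : ∀ x : Kˣ, (hx : x ∈ S.unit K) → (⟨x, hx⟩ : S.unit K) ∈ φ.ker →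
      ∀ v : HeightOneSpectrum R, v.valuation K (x : K) = 1 := by
    intro x hx hxk v
    by_cases hv : v ∈ S
    · have h1 : (v.valuationOfNeZero x) = 1 :=
        congrFun hxk ⟨v, hS.mem_toFinset.mpr hv⟩
      rw [← HeightOneSpectrum.valuationOfNeZero_eq, h1]
      rfl
    · exact hx v hv
  have hmem : ∀ w : Rˣ, Units.map (algebraMap R K : R →* K) w ∈ S.unit K := by
    intro w v _
    have := HeightOneSpectrum.valuation_of_unit_eq (K := K) v w
    rw [← HeightOneSpectrum.valuationOfNeZero_eq, this]
    rfl
  set ρ : Rˣ →* φ.ker :=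
    ((Units.map (algebraMap R K : R →* K)).codRestrict (S.unit K) hmem).codRestrict φ.ker
      (by
        intro w
        rw [MonoidHom.mem_ker]
        funext v
        exact HeightOneSpectrum.valuation_of_unit_eq v.1 w) with hρ
  have hρsurj : Function.Surjective ρ := by
    rintro ⟨⟨x, hx⟩, hxk⟩
    have hval := hker x hx hxk
    obtain ⟨r, hr⟩ := WOMFF.exists_algebraMap_eq_of_valuation_le_one (x : K)
      (fun v => le_of_eq (hval v))
    obtain ⟨r', hr'⟩ := WOMFF.exists_algebraMap_eq_of_valuation_le_one ((x⁻¹ : Kˣ) : K)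
      (fun v => by
        rw [Units.val_inv_eq_inv_val, map_inv₀, hval v, inv_one])
    have hrr' : r * r' = 1 := by
      apply (IsFractionRing.injective R K)
      rw [map_mul, hr, hr', map_one]
      exact x.mul_inv
    refine ⟨⟨r, r', hrr', by rwa [mul_comm] at hrr'⟩, ?_⟩
    ext
    exact hr
  have hkerfg : Group.FG φ.ker := by
    have h1 : Group.FG Rˣ := Group.fg_iff_monoid_fg.mpr inferInstance
    exact Group.fg_of_surjective hρsurj
  have hmod : Module.Finite ℤ (Additive (S.unit K)) := by
    rw [Module.finite_def]
    refine Submodule.fg_of_fg_map_of_fg_inf_ker (MonoidHom.toAdditive φ).toIntLinearMap ?_ ?_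
    · have e : Additive ({v // v ∈ hS.toFinset} → Multiplicative ℤ) ≃+
          ({v // v ∈ hS.toFinset} → ℤ) :=
        { toFun := fun f v => Multiplicative.toAdd (Additive.toMul f v)
          invFun := fun f => Additive.ofMul (fun v => Multiplicative.ofAdd (f v))
          left_inv := fun f => rfl
          right_inv := fun f => rfl
          map_add' := fun f g => rfl }
      have : IsNoetherian ℤ (Additive ({v // v ∈ hS.toFinset} → Multiplicative ℤ)) :=
        isNoetherian_of_linearEquiv e.toIntLinearEquiv.symm
      exact IsNoetherian.noetherian _
    · rw [inf_of_le_right le_top, AddMonoidHom.coe_toIntLinearMap_ker,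
        MonoidHom.coe_toAdditive_ker, Submodule.fg_iff_addSubgroup_fg,
        AddSubgroup.toIntSubmodule_toAddSubgroup, ← AddGroup.fg_iff_addSubgroup_fg]
      have h2 := (Group.fg_iff_subgroup_fg φ.ker).mp hkerfg
      rw [Subgroup.fg_iff_add_fg] at h2
      exact (AddGroup.fg_iff_addSubgroup_fg _).mpr h2
  have hmfg : Monoid.FG (S.unit K) := by
    rw [Monoid.fg_iff_add_fg, ← AddGroup.fg_iff_addMonoid_fg, ← Module.Finite.iff_addGroup_fg]
    exact hmod
  exact Group.fg_iff_monoid_fg.mpr hmfg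

private lemma WOMFF.quot_finite (G : Type*) [CommGroup G] [Group.FG G] (d : ℕ) (hd : d ≠ 0) :
    Finite (G ⧸ (powMonoidHom d : G →* G).range) := by
  have hfg : Group.FG (G ⧸ (powMonoidHom d : G →* G).range) :=
    Group.fg_of_surjective (QuotientGroup.mk'_surjective _)
  apply CommGroup.finite_of_fg_torsion
  intro q
  refine isOfFinOrder_iff_pow_eq_one.mpr ⟨d, Nat.pos_of_ne_zero hd, ?_⟩
  induction q using QuotientGroup.induction_on with
  | H g =>
    rw [← QuotientGroup.mk_pow, QuotientGroup.eq_one_iff]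
    exact ⟨g, rfl⟩

private lemma WOMFF.finset_gcd_mem {ι : Type*} (s : Finset ι) (f : ι → ℕ) (H : AddSubgroup ℤ)
    (h : ∀ i ∈ s, (f i : ℤ) ∈ H) : ((s.gcd f : ℕ) : ℤ) ∈ H := by
  classical
  induction s using Finset.induction with
  | empty => simpa using H.zero_mem
  | insert a s hx ih =>
    rw [Finset.gcd_insert]
    have ha : ((f a : ℕ) : ℤ) ∈ H := h a (Finset.mem_insert_self a s)
    have hg : ((s.gcd f : ℕ) : ℤ) ∈ H := ih (fun i hi => h i (Finset.mem_insert_of_mem hi))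
    set A := Int.gcdA ((f a : ℕ) : ℤ) ((s.gcd f : ℕ) : ℤ) with hA
    set B := Int.gcdB ((f a : ℕ) : ℤ) ((s.gcd f : ℕ) : ℤ) with hB
    have hbezout : ((Nat.gcd (f a) (s.gcd f) : ℕ) : ℤ) =
        ((f a : ℕ) : ℤ) * A + ((s.gcd f : ℕ) : ℤ) * B := by
      rw [← Int.gcd_natCast_natCast]
      exact Int.gcd_eq_gcd_ab _ _
    show ((Nat.gcd (f a) (s.gcd f) : ℕ) : ℤ) ∈ H
    rw [hbezout]
    refine H.add_mem ?_ ?_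
    · simpa [zsmul_eq_mul, mul_comm] using H.zsmul_mem ha A
    · simpa [zsmul_eq_mul, mul_comm] using H.zsmul_mem hg B

/-- Finite fibers of the map from `O_{K,S}^×`-orbits of tuples of `S`-integers (under the
weighted action `u·(I₁,…,I_m) = (u^{n₁}I₁,…,u^{n_m}I_m)`) to `ℂ^×`-orbits of tuples of
complex numbers: for each tuple `J` of `S`-integers which is nonzero modulo every prime
`𝔭 ∉ S`, there is a finite set `F` of tuples such that every similarly nondegenerate tuple
`I` of `S`-integers which is `ℂ^×`-equivalent to `J` is `O_{K,S}^×`-equivalent to a member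
of `F`. -/
theorem weighted_orbit_map_finite_fibers (K : Type*) [Field K] [NumberField K]
    (S : Set (HeightOneSpectrum (NumberField.RingOfIntegers K))) (hS : S.Finite)
    (m : ℕ) (n : Fin m → ℕ) (hn : ∀ i, 0 < n i)
    (ι : K →+* ℂ) (J : Fin m → K)
    (hJ : ∀ i, J i ∈ S.integer K)
    (hJmin : ∀ v : HeightOneSpectrum (NumberField.RingOfIntegers K), v ∉ S →
      ∃ i, v.valuation K (J i) = 1) :
    ∃ F : Finset (Fin m → K),
      ∀ I : Fin m → K, (∀ i, I i ∈ S.integer K) →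
        (∀ v : HeightOneSpectrum (NumberField.RingOfIntegers K), v ∉ S →
          ∃ i, v.valuation K (I i) = 1) →
        (∃ α : ℂˣ, ∀ i, (α : ℂ) ^ (n i) * ι (I i) = ι (J i)) →
        ∃ I' ∈ F, ∃ u : S.unit K, ∀ i, (((u : Kˣ) : K)) ^ (n i) * I i = I' i := by

  classical
  obtain ⟨v0, hv0⟩ := WOMFF.exists_heightOneSpectrum_not_mem K S hS
  obtain ⟨i0, hi0⟩ := hJmin v0 hv0
  have hJi0 : J i0 ≠ 0 := by
    intro h
    rw [h, map_zero] at hi0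
    exact zero_ne_one hi0
  set T : Finset (Fin m) := Finset.univ.filter (fun i => J i ≠ 0) with hT
  set d : ℕ := T.gcd n with hd
  have hi0T : i0 ∈ T := by simp [hT, hJi0]
  have hdpos : 0 < d := by
    rcases Nat.eq_zero_or_pos d with h | h
    · exact absurd (Finset.gcd_eq_zero_iff.mp h i0 hi0T) (hn i0).ne'
    · exact h
  have hddvd : ∀ i ∈ T, d ∣ n i := fun i hi => Finset.gcd_dvd hi
  have hfg : Group.FG (S.unit K) := WOMFF.sunit_fg K S hS
  set N : Subgroup (S.unit K) :=
    (powMonoidHom d : (S.unit K) →* (S.unit K)).range with hN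
  have hfinquot : Finite ((S.unit K) ⧸ N) := WOMFF.quot_finite _ d hdpos.ne'
  set fF : ((S.unit K) ⧸ N) → (Fin m → K) := fun q => fun i =>
    ((((Quotient.out q : S.unit K) : Kˣ) : K))⁻¹ ^ (n i / d) * J i with hfF
  have hFin : (Set.range fF).Finite := Set.finite_range _
  refine ⟨hFin.toFinset, ?_⟩
  rintro I hI hImin ⟨α, hα⟩
  -- zero coordinates agree
  have hI0 : ∀ i, I i = 0 ↔ J i = 0 := by
    intro i
    constructor
    · intro h
      have h2 := hα i
      rw [h, map_zero, mul_zero] at h2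
      exact (map_eq_zero_iff ι ι.injective).mp h2.symm
    · intro h
      have h2 := hα i
      rw [h, map_zero] at h2
      rcases mul_eq_zero.mp h2 with h3 | h3
      · exact absurd h3 (pow_ne_zero _ α.ne_zero)
      · exact (map_eq_zero_iff ι ι.injective).mp h3
  -- the subgroup of exponents k with α^k in the image of ι
  set H : AddSubgroup ℤ :=
    { carrier := {k : ℤ | ((α ^ k : ℂˣ) : ℂ) ∈ ι.fieldRange}
      zero_mem' := by
        simp only [Set.mem_setOf_eq, zpow_zero, Units.val_one]
        exact ⟨1, map_one ι⟩
      add_mem' := by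
        intro x y hx hy
        simp only [Set.mem_setOf_eq, zpow_add, Units.val_mul] at *
        exact mul_mem hx hy
      neg_mem' := by
        intro x hx
        simp only [Set.mem_setOf_eq, zpow_neg, Units.val_inv_eq_inv_val] at *
        exact inv_mem hx } with hH
  have hnH : ∀ i ∈ T, ((n i : ℕ) : ℤ) ∈ H := by
    intro i hi
    have hJine : J i ≠ 0 := by simpa [hT] using hi
    have hIine : I i ≠ 0 := fun h => hJine ((hI0 i).mp h)
    have hιI : ι (I i) ≠ 0 := fun h => hIine ((map_eq_zero_iff ι ι.injective).mp h)
    show ((α ^ ((n i : ℕ) : ℤ) : ℂˣ) : ℂ) ∈ ι.fieldRange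
    refine ⟨J i / I i, ?_⟩
    rw [map_div₀, eq_comm, zpow_natCast, Units.val_pow_eq_pow_val, eq_div_iff hιI]
    exact hα i
  have hdH : ((d : ℕ) : ℤ) ∈ H := WOMFF.finset_gcd_mem T n H hnH
  obtain ⟨β, hβ⟩ := hdH
  have hβ' : ι β = (α : ℂ) ^ d := by
    rw [hβ]
    rw [zpow_natCast, Units.val_pow_eq_pow_val]
  have hβ0 : β ≠ 0 := by
    intro h
    rw [h, map_zero] at hβ'
    exact pow_ne_zero d α.ne_zero hβ'.symm
  have hrel : ∀ i, β ^ (n i / d) * I i = J i := by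
    intro i
    by_cases hiT : i ∈ T
    · apply ι.injective
      rw [map_mul, map_pow, hβ', ← pow_mul, Nat.mul_div_cancel' (hddvd i hiT)]
      exact hα i
    · have hJi : J i = 0 := by simpa [hT] using hiT
      rw [hJi, (hI0 i).mpr hJi, mul_zero]
  -- β is an S-unit
  have hβv : ∀ v ∉ S, v.valuation K β = 1 := by
    intro v hv
    obtain ⟨i1, hi1⟩ := hImin v hv
    obtain ⟨i2, hi2⟩ := hJmin v hv
    have hIi1 : I i1 ≠ 0 := by
      intro h; rw [h, map_zero] at hi1; exact zero_ne_one hi1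
    have hJi2 : J i2 ≠ 0 := by
      intro h; rw [h, map_zero] at hi2; exact zero_ne_one hi2
    have hIi2 : I i2 ≠ 0 := fun h => hJi2 ((hI0 i2).mp h)
    have hi1T : i1 ∈ T := by
      have : J i1 ≠ 0 := by
        rw [← hrel i1]
        exact mul_ne_zero (pow_ne_zero _ hβ0) hIi1
      simp [hT, this]
    have hi2T : i2 ∈ T := by simp [hT, hJi2]
    have hk1 : n i1 / d ≠ 0 :=
      Nat.div_ne_zero_iff.mpr ⟨hdpos.ne', Nat.le_of_dvd (hn i1) (hddvd i1 hi1T)⟩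
    have hk2 : n i2 / d ≠ 0 :=
      Nat.div_ne_zero_iff.mpr ⟨hdpos.ne', Nat.le_of_dvd (hn i2) (hddvd i2 hi2T)⟩
    have hle : v.valuation K β ≤ 1 := by
      have h1 : v.valuation K (J i1) ≤ 1 := hJ i1 v hv
      rw [← hrel i1, Valuation.map_mul, Valuation.map_pow, hi1, mul_one] at h1
      exact (pow_le_one_iff hk1).mp h1
    have hge : 1 ≤ v.valuation K β := by
      have h2 : (1 : WithZero (Multiplicative ℤ)) =
          (v.valuation K β) ^ (n i2 / d) * v.valuation K (I i2) := by
        rw [← Valuation.map_pow, ← Valuation.map_mul, hrel i2, hi2]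
      have h3 : (1 : WithZero (Multiplicative ℤ)) ≤ (v.valuation K β) ^ (n i2 / d) := by
        calc (1 : WithZero (Multiplicative ℤ))
            = (v.valuation K β) ^ (n i2 / d) * v.valuation K (I i2) := h2
          _ ≤ (v.valuation K β) ^ (n i2 / d) * 1 :=
            mul_le_mul_right (hI i2 v hv) _
          _ = (v.valuation K β) ^ (n i2 / d) := mul_one _
      exact (one_le_pow_iff hk2).mp h3
    exact le_antisymm hle hge
  set βu : Kˣ := Units.mk0 β hβ0 with hβu
  have hβG : βu ∈ S.unit K := fun v hv => hβv v hv
  set q : (S.unit K) ⧸ N := QuotientGroup.mk (⟨βu, hβG⟩ : S.unit K) with hq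
  set t : S.unit K := Quotient.out q with ht
  have hout : QuotientGroup.mk t = q := QuotientGroup.out_eq' q
  rw [hq] at hout
  rw [QuotientGroup.eq] at hout
  obtain ⟨u, hu⟩ := hout
  -- hu : powMonoidHom d u = t⁻¹ * ⟨βu, hβG⟩
  have hdecomp : β = ((t : Kˣ) : K) * (((u : Kˣ) : K)) ^ d := by
    have h1 : (t : S.unit K) * (u ^ d) = ⟨βu, hβG⟩ := by
      rw [show (u : S.unit K) ^ d = powMonoidHom d u from rfl, hu, ← mul_assoc,
        mul_inv_cancel, one_mul]
    have h2 := congrArg (fun x : S.unit K => ((x : Kˣ) : K)) h1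
    simpa [hβu] using h2.symm
  refine ⟨fF q, hFin.mem_toFinset.mpr ⟨q, rfl⟩, u, ?_⟩
  intro i
  rw [hfF]
  show ((u : Kˣ) : K) ^ (n i) * I i = (((t : Kˣ) : K))⁻¹ ^ (n i / d) * J i
  by_cases hiT : i ∈ T
  · have hk : d * (n i / d) = n i := Nat.mul_div_cancel' (hddvd i hiT)
    have ht0 : ((t : Kˣ) : K) ≠ 0 := Units.ne_zero _
    rw [← hrel i, hdecomp, mul_pow, ← pow_mul, hk]
    rw [inv_pow]
    rw [← mul_assoc, ← mul_assoc, inv_mul_cancel₀ (pow_ne_zero _ ht0), one_mul]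
  · have hJi : J i = 0 := by simpa [hT] using hiT
    rw [hJi, (hI0 i).mpr hJi, mul_zero, mul_zero]
end

section
/- Let L be a rank-2 lattice (free ℤ-module of rank 2) with a symmetric bilinear pairing, and let H₁, H₂ ∈ L satisfy H₁·H₁ = H₂·H₂ = 2 and H₁·H₂ = 4. If L admits a basis L₁, L₂ and the sublattice generated by H₁, H₂ has full rank, then the index of ℤH₁ + ℤH₂ in L divides 4. -/
/-- Gram determinant change under a (not necessarily invertible) coordinate change,
for a symmetric bilinear form. -/
lemma gram_det_change {R L : Type*} [CommRing R] [AddCommGroup L] [Module R L]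
    (B : L →ₗ[R] L →ₗ[R] R) (hsymm : ∀ x y, B x y = B y x)
    (u v : L) (a b c d : R) :
    B (a • u + b • v) (a • u + b • v) * B (c • u + d • v) (c • u + d • v) -
      B (a • u + b • v) (c • u + d • v) * B (c • u + d • v) (a • u + b • v) =
      (a * d - b * c) ^ 2 * (B u u * B v v - B u v * B v u) := by
  simp only [map_add, map_smul, LinearMap.add_apply, LinearMap.smul_apply, smul_eq_mul]
  rw [hsymm v u]
  ring

lemma sq_dvd_twelve_imp_dvd_four (m : ℕ) (h : m ^ 2 ∣ 12) : m ∣ 4 := by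
  have h12 : m ^ 2 ≤ 12 := Nat.le_of_dvd (by norm_num) h
  have hm3 : m ≤ 3 := by nlinarith
  interval_cases m <;> revert h <;> decide

/-- Let `L` be a rank-`2` lattice (free `ℤ`-module of rank `2`) with a symmetric bilinear
pairing `B`, and let `H₁, H₂ ∈ L` satisfy `H₁·H₁ = H₂·H₂ = 2` and `H₁·H₂ = 4`.  If the
sublattice generated by `H₁, H₂` has full rank, then its index in `L` divides `4`. -/
theorem sublattice_index_divides_four (L : Type*) [AddCommGroup L] [Module ℤ L]
    [Module.Free ℤ L] (hrank : Module.finrank ℤ L = 2)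
    (B : L →ₗ[ℤ] L →ₗ[ℤ] ℤ) (hsymm : ∀ x y, B x y = B y x)
    (H₁ H₂ : L) (h11 : B H₁ H₁ = 2) (h22 : B H₂ H₂ = 2) (h12 : B H₁ H₂ = 4)
    (hfull : Module.finrank ℤ (Submodule.span ℤ ({H₁, H₂} : Set L)) = 2) :
    (Submodule.span ℤ ({H₁, H₂} : Set L)).toAddSubgroup.index ∣ 4 := by
  classical
  have hfin : Module.Finite ℤ L := Module.finite_of_finrank_pos (by omega)
  set N : Submodule ℤ L := Submodule.span ℤ ({H₁, H₂} : Set L) with hN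
  obtain ⟨n, snf⟩ := N.smithNormalForm (Module.Free.chooseBasis ℤ L)
  have hcard : Fintype.card (Module.Free.ChooseBasisIndex ℤ L) = 2 := by
    rw [← Module.finrank_eq_card_chooseBasisIndex, hrank]
  have hn : n = 2 := by
    letI : Unique (Module ℤ ↥N) := AddCommGroup.uniqueIntModule
    letI : Module ℤ ↥N := N.module
    have h := Module.finrank_eq_card_basis snf.bN
    rw [Fintype.card_fin] at h
    rw [← h, ← hfull]
    congr 1
    exact Subsingleton.elim _ _
  subst hn
  -- compute the index
  have hindex : N.toAddSubgroup.index = (snf.a 0 * snf.a 1).natAbs := by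
    rw [snf.toAddSubgroup_index_eq_ite, if_pos hcard.symm]
    simp only [Ideal.span_singleton_toAddSubgroup_eq_zmultiples, Int.index_zmultiples]
    rw [Fin.prod_univ_two, ← Int.natAbs_mul]
  -- coordinates of H₁, H₂ in the basis of N
  have h1mem : H₁ ∈ N := Submodule.subset_span (by simp)
  have h2mem : H₂ ∈ N := Submodule.subset_span (by simp)
  obtain ⟨c, hc1⟩ := snf.bN.mem_submodule_iff'.mp h1mem
  obtain ⟨d, hc2⟩ := snf.bN.mem_submodule_iff'.mp h2mem
  rw [Fin.sum_univ_two] at hc1 hc2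
  -- Gram determinant computations
  set u : L := snf.bM (snf.f 0) with hu
  set v : L := snf.bM (snf.f 1) with hv
  set D : ℤ := B u u * B v v - B u v * B v u with hD
  have step1 : B (snf.bN 0 : L) (snf.bN 0 : L) * B (snf.bN 1 : L) (snf.bN 1 : L) -
      B (snf.bN 0 : L) (snf.bN 1 : L) * B (snf.bN 1 : L) (snf.bN 0 : L) =
      (snf.a 0 * snf.a 1) ^ 2 * D := by
    rw [snf.snf 0, snf.snf 1, ← hu, ← hv]
    simp only [map_smul, LinearMap.smul_apply, smul_eq_mul]
    rw [hD]
    ring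
  have step2 := gram_det_change B hsymm (snf.bN 0 : L) (snf.bN 1 : L) (c 0) (c 1) (d 0) (d 1)
  rw [← hc1, ← hc2, step1, h11, h22, h12, hsymm H₂ H₁, h12] at step2
  norm_num at step2
  -- step2 : -12 = (c 0 * d 1 - c 1 * d 0) ^ 2 * ((snf.a 0 * snf.a 1) ^ 2 * D)
  have hdvd : (snf.a 0 * snf.a 1) ^ 2 ∣ (12 : ℤ) := by
    refine ⟨(c 0 * d 1 - c 1 * d 0) ^ 2 * (-D), ?_⟩
    linear_combination -step2
  have hdvdn : (snf.a 0 * snf.a 1).natAbs ^ 2 ∣ 12 := by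
    have h := Int.natAbs_dvd_natAbs.mpr hdvd
    simpa [Int.natAbs_pow] using h
  rw [hindex]
  exact sq_dvd_twelve_imp_dvd_four _ hdvdn
end
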